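/- arXiv:1904.09398 — 3 statements merged into one kernel-verified Lean document; each statement's English description precedes it below -/
import Mathlib

section
/- Let α > 1 and let x ∈ ℝⁿ be a K-sparse α-strongly-decaying vector with support Ω. Then for every subset S ⊆ Ω, ‖x_S‖₁² ≤ φ_α(|S|) · ‖x_S‖₂², where φ_α(t) = (α^t − 1)(α + 1) / ((α^t + 1)(α − 1)). -/
set_option maxHeartbeats 800000

open Real


lemma geo_aux (α : ℝ) (hα : 1 < α) (m : ℕ) :
    ∑ i ∈ Finset.range m, (α ^ (i + 1))⁻¹ = (α ^ m - 1) / (α ^ m * (α - 1)) := by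
  have hα0 : (0:ℝ) < α := by linarith
  have hane : α ≠ 0 := ne_of_gt hα0
  have h1 : α - 1 ≠ 0 := ne_of_gt (by linarith)
  induction m with
  | zero => simp
  | succ m ih =>
    rw [Finset.sum_range_succ, ih]
    have h2 : (α:ℝ) ^ m ≠ 0 := pow_ne_zero _ hane
    have h3 : (α:ℝ) ^ (m + 1) ≠ 0 := pow_ne_zero _ hane
    field_simp
    ring

lemma core (α : ℝ) (hα : 1 < α) :
    ∀ (m : ℕ) (b : ℕ → ℝ), (∀ i, i < m → 0 < b i) →
      (∀ i, i + 1 < m → α * b (i + 1) ≤ b i) →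
      (∑ i ∈ Finset.range m, b i) ^ 2 ≤
        (α ^ m - 1) * (α + 1) / ((α ^ m + 1) * (α - 1)) * ∑ i ∈ Finset.range m, (b i) ^ 2 := by
  intro m
  induction m with
  | zero => intro b _ _; simp
  | succ m IH =>
    intro b hbpos hdec
    have hα0 : (0:ℝ) < α := by linarith
    have hb0 : 0 < b 0 := hbpos 0 (Nat.succ_pos m)
    rcases Nat.eq_zero_or_pos m with hm | hm
    · subst hm
      norm_num [Finset.sum_range_one]
      have hc : (α - 1) * (α + 1) / ((α + 1) * (α - 1)) = 1 := by
        rw [div_eq_one_iff_eq (ne_of_gt (by nlinarith : (0:ℝ) < (α + 1) * (α - 1)))]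
        ring
      rw [hc, one_mul]
    · have hp1 : 1 < α ^ m := one_lt_pow₀ hα hm.ne'
      have hppos : (0:ℝ) < α ^ m := by positivity
      set p : ℝ := α ^ m with hpdef
      set t : ℝ := ∑ i ∈ Finset.range m, b (i + 1) with htdef
      set q : ℝ := ∑ i ∈ Finset.range m, (b (i + 1)) ^ 2 with hqdef
      have ht0 : 0 ≤ t := Finset.sum_nonneg fun i hi =>
        (hbpos (i + 1) (by have := Finset.mem_range.mp hi; omega)).le
      have hq0 : 0 ≤ q := Finset.sum_nonneg fun i _ => sq_nonneg _
      have hIH : t ^ 2 ≤ (p - 1) * (α + 1) / ((p + 1) * (α - 1)) * q :=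
        IH (fun i => b (i + 1)) (fun i hi => hbpos (i + 1) (by omega))
          (fun i hi => hdec (i + 1) (by omega))
      have haux : ∀ i, i < m + 1 → α ^ i * b i ≤ b 0 := by
        intro i
        induction i with
        | zero => intro _; simp
        | succ i ih =>
          intro h
          have h1 : α * b (i + 1) ≤ b i := hdec i (by omega)
          have h2 : α ^ i * b i ≤ b 0 := ih (by omega)
          calc α ^ (i + 1) * b (i + 1) = α ^ i * (α * b (i + 1)) := by ring
            _ ≤ α ^ i * b i := mul_le_mul_of_nonneg_left h1 (by positivity)
            _ ≤ b 0 := h2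
      have ht : t ≤ b 0 * ((p - 1) / (p * (α - 1))) := by
        have hstep : ∀ i ∈ Finset.range m, b (i + 1) ≤ b 0 * (α ^ (i + 1))⁻¹ := by
          intro i hi
          have h1 := haux (i + 1) (by simp at hi; omega)
          have h2 : (0:ℝ) < α ^ (i + 1) := by positivity
          have h3 : b (i + 1) ≤ b 0 / α ^ (i + 1) :=
            (le_div_iff₀ h2).mpr (by linarith [h1])
          simpa [div_eq_mul_inv] using h3
        calc t ≤ ∑ i ∈ Finset.range m, b 0 * (α ^ (i + 1))⁻¹ :=
              Finset.sum_le_sum hstep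
          _ = b 0 * ∑ i ∈ Finset.range m, (α ^ (i + 1))⁻¹ := by
              rw [Finset.mul_sum]
          _ = b 0 * ((p - 1) / (p * (α - 1))) := by rw [geo_aux α hα m]
      -- polynomial forms
      have hden1 : (0:ℝ) < (p + 1) * (α - 1) := by nlinarith
      have hs1 : 0 ≤ (p - 1) * (α + 1) * q - (p + 1) * (α - 1) * t ^ 2 := by
        rw [div_mul_eq_mul_div, le_div_iff₀ hden1] at hIH
        linarith
      have hu : t * (p * (α - 1)) ≤ b 0 * (p - 1) := by
        have h4 : (0:ℝ) < p * (α - 1) := by nlinarith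
        rw [mul_div_assoc'] at ht
        rw [le_div_iff₀ h4] at ht
        linarith
      have hs2 : 0 ≤ (b 0 * (p - 1) - t * (p * (α - 1))) *
          (α * p * (b 0 * (p - 1)) - t * (p * (α - 1))) := by
        apply mul_nonneg (by linarith)
        have hv : 0 ≤ b 0 * (p - 1) := by nlinarith
        have h5 : 0 ≤ (α * p - 1) * (b 0 * (p - 1)) := mul_nonneg (by nlinarith) hv
        nlinarith
      rw [Finset.sum_range_succ', Finset.sum_range_succ']
      have hps : α ^ (m + 1) = p * α := pow_succ α m
      rw [hps]
      have hden2 : (0:ℝ) < (p * α + 1) * (α - 1) := by nlinarith [mul_pos hppos hα0]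
      rw [div_mul_eq_mul_div, le_div_iff₀ hden2]
      have hap : 1 < α * p := by nlinarith [mul_pos (sub_pos.2 hα) (sub_pos.2 hp1)]
      have hc1 : (0:ℝ) ≤ p * ((α * p - 1) * (α + 1)) :=
        mul_nonneg hppos.le (mul_nonneg (by linarith) (by linarith))
      have hc2 : (0:ℝ) ≤ 2 * (α + 1) := by linarith
      have hscale : (0:ℝ) < p * (p - 1) * (α + 1) := mul_pos (mul_pos hppos (by linarith)) (by linarith)
      have key : ((t + b 0) ^ 2 * ((p * α + 1) * (α - 1))) * (p * (p - 1) * (α + 1)) ≤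
          ((p * α - 1) * (α + 1) * (q + b 0 ^ 2)) * (p * (p - 1) * (α + 1)) := by
        linarith [mul_nonneg hc1 hs1, mul_nonneg hc2 hs2]
      exact le_of_mul_le_mul_right key hscale

noncomputable section

/-- `x` is a `K`-sparse `α`-strongly-decaying vector: there is an ordering of the entries
by nonincreasing absolute value in which all entries beyond the `K`-th vanish and each of
the first `K - 1` entries is at least `α` times the next one in absolute value. -/
def StronglyDecaying {n : ℕ} (α : ℝ) (K : ℕ) (x : Fin n → ℝ) : Prop :=
  ∃ σ : Equiv.Perm (Fin n),
    (∀ i j : Fin n, i ≤ j → |x (σ j)| ≤ |x (σ i)|) ∧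
    (∀ i : Fin n, K ≤ (i : ℕ) → x (σ i) = 0) ∧
    (∀ i j : Fin n, (j : ℕ) = (i : ℕ) + 1 → (j : ℕ) < K → α * |x (σ j)| ≤ |x (σ i)|)

theorem strongly_decaying_disparity
    {n : ℕ} (α : ℝ) (hα : 1 < α) (K : ℕ) (x : Fin n → ℝ)
    (hx : StronglyDecaying α K x)
    (S : Finset (Fin n)) (hS : (↑S : Set (Fin n)) ⊆ {i | x i ≠ 0}) :
    (∑ i ∈ S, |x i|) ^ 2 ≤
      (α ^ (S.card : ℝ) - 1) * (α + 1) / ((α ^ (S.card : ℝ) + 1) * (α - 1)) *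
        ∑ i ∈ S, (x i) ^ 2 := by
  obtain ⟨σ, hmono, hzero, hdec⟩ := hx
  have hα0 : (0:ℝ) < α := by linarith
  set T : Finset (Fin n) := S.image σ.symm with hT
  set m : ℕ := S.card with hmdef
  have hTcard : T.card = m := Finset.card_image_of_injective S σ.symm.injective
  have hTne : ∀ j ∈ T, x (σ j) ≠ 0 := by
    intro j hj
    obtain ⟨i, hi, rfl⟩ := Finset.mem_image.mp hj
    simpa using hS hi
  have hTK : ∀ j ∈ T, (j : ℕ) < K := by
    intro j hj
    by_contra h
    exact hTne j hj (hzero j (le_of_not_gt h))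
  let e : Fin m ≃o {j // j ∈ T} := T.orderIsoOfFin hTcard
  set b : ℕ → ℝ := fun i => if h : i < m then |x (σ ((e ⟨i, h⟩ : {j // j ∈ T}) : Fin n))| else 0
    with hbdef
  have hbpos : ∀ i, i < m → 0 < b i := by
    intro i hi
    simp only [hbdef, dif_pos hi]
    exact abs_pos.mpr (hTne _ (e ⟨i, hi⟩).2)
  have hbdec : ∀ i, i + 1 < m → α * b (i + 1) ≤ b i := by
    intro i hi
    have hi' : i < m := by omega
    simp only [hbdef, dif_pos hi, dif_pos hi']
    set j1 : Fin n := ((e ⟨i, hi'⟩ : {j // j ∈ T}) : Fin n) with hj1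
    set j2 : Fin n := ((e ⟨i + 1, hi⟩ : {j // j ∈ T}) : Fin n) with hj2
    have hlt : j1 < j2 := by
      have : (⟨i, hi'⟩ : Fin m) < ⟨i + 1, hi⟩ := by
        simp [Fin.lt_def]
      exact Subtype.coe_lt_coe.mpr (e.strictMono this)
    have hle : (j1 : ℕ) + 1 ≤ (j2 : ℕ) := hlt
    have hj2K : (j2 : ℕ) < K := hTK j2 (e ⟨i + 1, hi⟩).2
    have hj'lt : (j1 : ℕ) + 1 < n := lt_of_le_of_lt hle j2.isLt
    set j' : Fin n := ⟨(j1 : ℕ) + 1, hj'lt⟩ with hj'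
    have h1 : |x (σ j2)| ≤ |x (σ j')| := hmono j' j2 (by simp [hj', Fin.le_def]; omega)
    have h2 : α * |x (σ j')| ≤ |x (σ j1)| := hdec j1 j' rfl (by simp [hj']; omega)
    calc α * |x (σ j2)| ≤ α * |x (σ j')| := by nlinarith [abs_nonneg (x (σ j2)), abs_nonneg (x (σ j'))]
      _ ≤ |x (σ j1)| := h2
  have hsum : ∀ g : Fin n → ℝ,
      ∑ i ∈ Finset.range m, (if h : i < m then g ((e ⟨i, h⟩ : {j // j ∈ T}) : Fin n) else 0)
        = ∑ i ∈ S, g (σ.symm i) := by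
    intro g
    rw [← Fin.sum_univ_eq_sum_range]
    calc ∑ i : Fin m, (if h : (i : ℕ) < m then g ((e ⟨(i : ℕ), h⟩ : {j // j ∈ T}) : Fin n) else 0)
        = ∑ i : Fin m, g ((e i : {j // j ∈ T}) : Fin n) := by
          refine Finset.sum_congr rfl fun i _ => ?_
          rw [dif_pos i.isLt]
      _ = ∑ j : {j // j ∈ T}, g (j : Fin n) := Fintype.sum_equiv e.toEquiv _ _ (fun i => rfl)
      _ = ∑ j ∈ T, g j := Finset.sum_coe_sort T _
      _ = ∑ i ∈ S, g (σ.symm i) :=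
          Finset.sum_image (fun a _ c _ h => σ.symm.injective h)
  have h1 : ∑ i ∈ Finset.range m, b i = ∑ i ∈ S, |x i| := by
    rw [hbdef, hsum (fun j => |x (σ j)|)]
    simp
  have h2 : ∑ i ∈ Finset.range m, (b i) ^ 2 = ∑ i ∈ S, (x i) ^ 2 := by
    have := hsum (fun j => |x (σ j)| ^ 2)
    simp only [hbdef]
    rw [show (∑ i ∈ Finset.range m,
        (if h : i < m then |x (σ ((e ⟨i, h⟩ : {j // j ∈ T}) : Fin n))| else 0) ^ 2)
      = ∑ i ∈ Finset.range m,
        (if h : i < m then |x (σ ((e ⟨i, h⟩ : {j // j ∈ T}) : Fin n))| ^ 2 else 0) from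
      Finset.sum_congr rfl fun i hi => by
        rw [dif_pos (Finset.mem_range.mp hi), dif_pos (Finset.mem_range.mp hi)]]
    rw [this]
    simp [sq_abs]
  have hmain := core α hα m b hbpos hbdec
  rw [h1, h2] at hmain
  have hrpow : α ^ (S.card : ℝ) = α ^ m := by
    rw [hmdef, Real.rpow_natCast]
  rw [hrpow]
  exact hmain

end
end

section
/- Let α > 1 and define φ_α(t) = (α^t − 1)(α + 1)/((α^t + 1)(α − 1)). Then φ_α(1) = 1 and φ_α(t) ≤ t for every real t ≥ 1; in particular 0 < φ_α(k) ≤ k for every positive integer k. -/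
/-!
With `L = log α` one has `φ_α(t) = tanh (L t / 2) / tanh (L / 2)`. Since `tanh` is concave on
`[0, ∞)` (its derivative `cosh⁻²` decreases there) and vanishes at `0`, it satisfies
`tanh (t s) ≤ t tanh s` for `s ≥ 0` and `t ≥ 1`, which is `φ_α(t) ≤ t`.
-/

open Real

noncomputable section

/-- The disparity function `φ_α(t) = (α^t − 1)(α + 1)/((α^t + 1)(α − 1))`. -/
def phiDecay (α t : ℝ) : ℝ := (α ^ t - 1) * (α + 1) / ((α ^ t + 1) * (α - 1))

open Set

theorem ConcaveOn.le_mul_of_one_le {𝕜 : Type*} [Field 𝕜] [LinearOrder 𝕜] [IsStrictOrderedRing 𝕜]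
    {f : 𝕜 → 𝕜} (hf : ConcaveOn 𝕜 (Ici 0) f) (h0 : 0 ≤ f 0) {x t : 𝕜} (hx : 0 ≤ x)
    (ht : 1 ≤ t) : f (t * x) ≤ t * f x := by
  have ht0 : 0 < t := zero_lt_one.trans_le ht
  have key := hf.2 (x := 0) (y := t * x) self_mem_Ici (mul_nonneg ht0.le hx)
    (sub_nonneg.2 (inv_le_one_of_one_le₀ ht)) (inv_nonneg.2 ht0.le) (sub_add_cancel 1 t⁻¹)
  rw [smul_zero, zero_add, smul_eq_mul, smul_eq_mul, smul_eq_mul,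
    inv_mul_cancel_left₀ ht0.ne'] at key
  refine (inv_mul_le_iff₀ ht0).1 (key.trans' ?_)
  nlinarith [sub_nonneg.2 (inv_le_one_of_one_le₀ ht)]

namespace Real

theorem hasDerivAt_tanh (x : ℝ) : HasDerivAt tanh (cosh x ^ 2)⁻¹ x := by
  have h := (hasDerivAt_sinh x).div (hasDerivAt_cosh x) (cosh_pos x).ne'
  rw [← sq, ← sq, cosh_sq_sub_sinh_sq, one_div] at h
  exact h.congr_of_eventuallyEq (.of_forall fun y => tanh_eq_sinh_div_cosh y)

theorem tanh_pos {x : ℝ} (hx : 0 < x) : 0 < tanh x := by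
  rw [tanh_eq_sinh_div_cosh]
  exact div_pos (sinh_pos_iff.2 hx) (cosh_pos x)

theorem tanh_eq_exp_two_mul (x : ℝ) : tanh x = (exp (2 * x) - 1) / (exp (2 * x) + 1) := by
  rw [tanh_eq, exp_neg, two_mul, exp_add]
  field_simp

theorem concaveOn_tanh : ConcaveOn ℝ (Ici 0) tanh := by
  refine AntitoneOn.concaveOn_of_deriv (convex_Ici 0)
    (fun x _ => (hasDerivAt_tanh x).continuousAt.continuousWithinAt)
    (fun x _ => (hasDerivAt_tanh x).differentiableAt.differentiableWithinAt) ?_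
  rw [interior_Ici]
  intro x hx y hy hxy
  rw [(hasDerivAt_tanh x).deriv, (hasDerivAt_tanh y).deriv]
  have hcosh : cosh x ≤ cosh y := cosh_le_cosh.2 (by rw [abs_of_pos hx, abs_of_pos hy]; exact hxy)
  gcongr

end Real

theorem phiDecay_eq_tanh_div_tanh {α : ℝ} (hα : 0 < α) (t : ℝ) :
    phiDecay α t = tanh (log α / 2 * t) / tanh (log α / 2) := by
  have hpow : α ^ t = exp (2 * (log α / 2 * t)) := by
    rw [rpow_def_of_pos hα]
    ring_nf
  have hα' : α = exp (2 * (log α / 2)) := by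
    rw [mul_div_cancel₀ _ two_ne_zero, exp_log hα]
  rw [tanh_eq_exp_two_mul, tanh_eq_exp_two_mul, phiDecay, ← hpow, ← hα',
    div_div_div_eq]

theorem phiDecay_pos {α t : ℝ} (hα : 1 < α) (ht : 0 < t) : 0 < phiDecay α t := by
  have hL : 0 < log α / 2 := half_pos (log_pos hα)
  rw [phiDecay_eq_tanh_div_tanh (zero_lt_one.trans hα)]
  exact div_pos (tanh_pos (mul_pos hL ht)) (tanh_pos hL)

theorem phiDecay_le_self {α t : ℝ} (hα : 1 < α) (ht : 1 ≤ t) : phiDecay α t ≤ t := by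
  have hL : 0 < log α / 2 := half_pos (log_pos hα)
  rw [phiDecay_eq_tanh_div_tanh (zero_lt_one.trans hα), div_le_iff₀ (tanh_pos hL), mul_comm _ t]
  exact concaveOn_tanh.le_mul_of_one_le tanh_zero.ge hL.le ht

theorem phiDecay_le (α : ℝ) (hα : 1 < α) :
    phiDecay α 1 = 1 ∧ (∀ t : ℝ, 1 ≤ t → phiDecay α t ≤ t) ∧
      ∀ k : ℕ, 0 < k → 0 < phiDecay α k ∧ phiDecay α k ≤ k := by
  refine ⟨?_, fun t ht => phiDecay_le_self hα ht, fun k hk => ?_⟩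
  · rw [phiDecay_eq_tanh_div_tanh (zero_lt_one.trans hα), mul_one,
      div_self (tanh_pos (half_pos (log_pos hα))).ne']
  · exact ⟨phiDecay_pos hα (Nat.cast_pos.2 hk), phiDecay_le_self hα (Nat.one_le_cast.2 hk)⟩

end
end

section
/- Let α > 1 and define φ_α(t) = (α^t − 1)(α + 1)/((α^t + 1)(α − 1)). Then φ_α(t) < (α + 1)/(α − 1) for every t > 0, and φ_α(t) → (α + 1)/(α − 1) as t → ∞. Consequently, for every K-sparse α-strongly-decaying vector x ∈ ℝⁿ one has ‖x‖₁² ≤ ((α + 1)/(α − 1)) · ‖x‖₂², a bound independent of K. -/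
open Real Filter

noncomputable section

/-! Writing `φ_α(t) = (1 - 2/(α^t + 1)) · (α + 1)/(α - 1)` gives both the strict bound and the limit.
For a decaying sequence `b₀ ≥ b₁ ≥ …` with `α b_{m+1} ≤ b_m`, the tail `T = b₁ + b₂ + ⋯` satisfies
`(α - 1) T ≤ b₀`; expanding `(b₀ + T)²` and inducting on the length then gives
`(α - 1) (∑ b_m)² ≤ (α + 1) ∑ b_m²`, which the sorted absolute values of a strongly-decaying vector
satisfy (the decay condition past the support holds trivially since the entries vanish there). -/

lemma phiDecay_eq {α : ℝ} (hα₀ : 0 ≤ α) (hα₁ : α ≠ 1) (t : ℝ) :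
    phiDecay α t = (1 - 2 / (α ^ t + 1)) * ((α + 1) / (α - 1)) := by
  have hpos : 0 < α ^ t + 1 := by positivity
  have hα1 : α - 1 ≠ 0 := sub_ne_zero.mpr hα₁
  unfold phiDecay
  field_simp
  ring

lemma phiDecay_lt {α : ℝ} (hα : 1 < α) (t : ℝ) : phiDecay α t < (α + 1) / (α - 1) := by
  have hlim : 0 < (α + 1) / (α - 1) := div_pos (by linarith) (by linarith)
  have hgap : 0 < 2 / (α ^ t + 1) := by positivity
  rw [phiDecay_eq (by linarith) hα.ne']
  nlinarith

lemma tendsto_phiDecay_atTop {α : ℝ} (hα : 1 < α) :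
    Tendsto (phiDecay α) atTop (nhds ((α + 1) / (α - 1))) := by
  have hgap : Tendsto (fun t : ℝ => 2 / (α ^ t + 1)) atTop (nhds 0) :=
    tendsto_const_nhds.div_atTop
      (tendsto_atTop_add_const_right _ 1 (tendsto_rpow_atTop_of_base_gt_one α hα))
  have h := (tendsto_const_nhds (x := (1 : ℝ))).sub hgap |>.mul_const ((α + 1) / (α - 1))
  rw [sub_zero, one_mul] at h
  exact h.congr fun t => (phiDecay_eq (by linarith) hα.ne' t).symm

section DecayingSequence

open Finset

variable {α : ℝ}

lemma sub_one_mul_sum_range_succ_le {b : ℕ → ℝ} (hb : ∀ m, 0 ≤ b m)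
    (hd : ∀ m, α * b (m + 1) ≤ b m) (n : ℕ) :
    (α - 1) * ∑ m ∈ range n, b (m + 1) ≤ b 0 := by
  induction n generalizing b with
  | zero => simpa using hb 0
  | succ n ih =>
    have htail := ih (b := fun m => b (m + 1)) (fun m => hb _) (fun m => hd _)
    rw [sum_range_succ']
    linarith [hd 0]

lemma sub_one_mul_sq_sum_range_le {b : ℕ → ℝ} (hb : ∀ m, 0 ≤ b m)
    (hd : ∀ m, α * b (m + 1) ≤ b m) (n : ℕ) :
    (α - 1) * (∑ m ∈ range n, b m) ^ 2 ≤ (α + 1) * ∑ m ∈ range n, b m ^ 2 := by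
  induction n generalizing b with
  | zero => simp
  | succ n ih =>
    have hsq := ih (b := fun m => b (m + 1)) (fun m => hb _) (fun m => hd _)
    have htail := sub_one_mul_sum_range_succ_le hb hd n
    rw [sum_range_succ', sum_range_succ']
    nlinarith [mul_le_mul_of_nonneg_left htail (hb 0)]

end DecayingSequence

lemma StronglyDecaying.sub_one_mul_sq_sum_abs_le {n K : ℕ} {α : ℝ} {x : Fin n → ℝ}
    (hx : StronglyDecaying α K x) :
    (α - 1) * (∑ i, |x i|) ^ 2 ≤ (α + 1) * ∑ i, x i ^ 2 := by
  obtain ⟨σ, -, hsparse, hdecay⟩ := hx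
  set b : ℕ → ℝ := fun m => if h : m < n then |x (σ ⟨m, h⟩)| else 0 with hb_def
  have hb : ∀ m, 0 ≤ b m := fun m => by
    simp only [hb_def]
    split_ifs <;> positivity
  have hd : ∀ m, α * b (m + 1) ≤ b m := by
    intro m
    by_cases hn : m + 1 < n
    · have hm : m < n := by omega
      by_cases hK : m + 1 < K
      · simpa [hb_def, hm, hn] using hdecay ⟨m, hm⟩ ⟨m + 1, hn⟩ rfl hK
      · have hzero := hsparse ⟨m + 1, hn⟩ (by simp only; omega)
        simp [hb_def, hm, hn, hzero]
    · simpa [hb_def, hn] using hb m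
  have hsum : ∑ i, |x i| = ∑ m ∈ Finset.range n, b m := by
    rw [← Equiv.sum_comp σ, Finset.sum_fin_eq_sum_range]
  have hsq : ∑ i, x i ^ 2 = ∑ m ∈ Finset.range n, b m ^ 2 := by
    rw [← Equiv.sum_comp σ, Finset.sum_fin_eq_sum_range]
    refine Finset.sum_congr rfl fun m hm => ?_
    simp only [hb_def, dif_pos (Finset.mem_range.mp hm), sq_abs]
  rw [hsum, hsq]
  exact sub_one_mul_sq_sum_range_le hb hd n

theorem phiDecay_lt_limit (α : ℝ) (hα : 1 < α) :
    (∀ t : ℝ, 0 < t → phiDecay α t < (α + 1) / (α - 1)) ∧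
    Tendsto (fun t : ℝ => phiDecay α t) atTop (nhds ((α + 1) / (α - 1))) ∧
    ∀ (n K : ℕ) (x : Fin n → ℝ), StronglyDecaying α K x →
      (∑ i, |x i|) ^ 2 ≤ (α + 1) / (α - 1) * ∑ i, (x i) ^ 2 := by
  refine ⟨fun t _ => phiDecay_lt hα t, tendsto_phiDecay_atTop hα, fun n K x hx => ?_⟩
  rw [div_mul_eq_mul_div, le_div_iff₀ (by linarith), mul_comm]
  exact hx.sub_one_mul_sq_sum_abs_le

end
end
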